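/- arXiv:2006.13587 — 2 statements merged into one kernel-verified Lean document; each statement's English description precedes it below -/
import Mathlib

section
/- Let A be a real m × m matrix with all entries strictly positive. Then A has a simple eigenvalue λ₁ > 0 such that every other eigenvalue μ (over ℂ) satisfies |μ| < λ₁. -/
/-!
A positive eigenvector `x`, with eigenvalue `r > 0`, is found by maximising `r` subject to
`r • x ≤ A *ᵥ x` over the standard simplex (Collatz–Wielandt): at a maximiser equality holds,
because otherwise `A *ᵥ x` would satisfy the constraint for a strictly larger `r`.

If `b` has a positive entry and `s • b ≤ A *ᵥ b`, comparing `b` with the smallest multiple of `x`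
that dominates it gives `s ≤ r`. For a complex eigenpair `(μ, v)` the triangle inequality gives
`‖μ‖ • |v| ≤ A *ᵥ |v|`, hence `‖μ‖ ≤ r`. When `‖μ‖ = r`, `|v|` is itself an `r`-eigenvector and
the triangle inequality is an equality in every row, which forces `v` to be a rotation of `|v|`
and `μ = r`.

Real and imaginary parts reduce the `r`-eigenspace to that of the real matrix, which is the line
through `x`. A positive left eigenvector `w` has `w ⬝ᵥ x ≠ 0`, which excludes a Jordan chain of
length two, so the algebraic multiplicity of `r` is one.
-/

open Polynomial

open Finset

theorem Module.End.maxGenEigenspace_eq_eigenspace_of_ker_sq_le {K V : Type*} [Field K]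
    [AddCommGroup V] [Module K V] {f : End K V} {μ : K}
    (h : LinearMap.ker ((f - μ • 1) ^ 2) ≤ LinearMap.ker (f - μ • 1)) :
    f.maxGenEigenspace μ = f.eigenspace μ := by
  refine le_antisymm (fun v hv => ?_) eigenspace_le_maxGenEigenspace
  obtain ⟨k, hk⟩ := (mem_maxGenEigenspace f μ v).1 hv
  have hstable := ker_pow_constant (f := f - μ • 1) (k := 1) <| le_antisymm
    (by rw [sq, mul_eq_comp]; exact LinearMap.ker_le_ker_comp _ _) (by simpa using h)
  rw [eigenspace_def]
  rcases k with _ | k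
  · simp_all
  · have hv' : v ∈ LinearMap.ker ((f - μ • 1) ^ (1 + k)) := by rwa [add_comm]
    rwa [← hstable k, pow_one] at hv'

theorem inv_sum_smul_mem_stdSimplex {ι 𝕜 : Type*} [Fintype ι] [Nonempty ι] [Field 𝕜]
    [LinearOrder 𝕜] [IsStrictOrderedRing 𝕜] {y : ι → 𝕜} (hy : ∀ i, 0 < y i) :
    (∑ i, y i)⁻¹ • y ∈ stdSimplex 𝕜 ι := by
  have hsum : 0 < ∑ i, y i := sum_pos (fun i _ => hy i) univ_nonempty
  refine ⟨fun i => smul_nonneg (inv_nonneg.2 hsum.le) (hy i).le, ?_⟩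
  simp [← mul_sum, hsum.ne']

namespace Matrix

variable {n : Type*} [Fintype n]

section Field

variable [DecidableEq n] {K : Type*} [Field K] {B : Matrix n n K} {μ : K}

theorem mem_spectrum_iff_exists_mulVec_eq_smul :
    μ ∈ spectrum K B ↔ ∃ v ≠ 0, B *ᵥ v = μ • v := by
  rw [← spectrum_toLin', ← Module.End.hasEigenvalue_iff_mem_spectrum,
    Module.End.hasEigenvalue_iff, Submodule.ne_bot_iff]
  simp [and_comm]

theorem rootMultiplicity_charpoly_eq_one {x w : n → K} (hBx : B *ᵥ x = μ • x)
    (hx : ∀ v, B *ᵥ v = μ • v → ∃ c : K, v = c • x) (hwB : w ᵥ* B = μ • w)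
    (hwx : w ⬝ᵥ x ≠ 0) : B.charpoly.rootMultiplicity μ = 1 := by
  have hx0 : x ≠ 0 := by rintro rfl; simp at hwx
  have heig : Module.End.eigenspace (toLin' B) μ = K ∙ x := by
    ext v
    rw [Module.End.mem_eigenspace_iff, toLin'_apply, Submodule.mem_span_singleton]
    constructor
    · intro h
      obtain ⟨c, rfl⟩ := hx v h
      exact ⟨c, rfl⟩
    · rintro ⟨c, rfl⟩
      rw [mulVec_smul, hBx, smul_comm]
  have hsemisimple :
      LinearMap.ker ((toLin' B - μ • 1) ^ 2) ≤ LinearMap.ker (toLin' B - μ • 1) := by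
    intro v hv
    set u := (toLin' B - μ • 1) v with hu_def
    have hu : B *ᵥ u = μ • u := by
      have h : (toLin' B - μ • 1) u = 0 := by rwa [hu_def, ← Module.End.mul_apply, ← sq]
      simpa [sub_eq_zero] using h
    obtain ⟨c, hc⟩ := hx u hu
    have hwu : w ⬝ᵥ u = 0 := by
      simp [hu_def, dotProduct_sub, dotProduct_mulVec, hwB]
    rw [hc, dotProduct_smul, smul_eq_mul] at hwu
    rw [LinearMap.mem_ker, ← hu_def, hc, (mul_eq_zero.1 hwu).resolve_right hwx, zero_smul]
  rw [← charpoly_toLin', ← LinearMap.finrank_maxGenEigenspace_eq,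
    Module.End.maxGenEigenspace_eq_eigenspace_of_ker_sq_le hsemisimple, heig,
    finrank_span_singleton hx0]

end Field

theorem eq_of_mulVec_eq_smul_of_vecMul_eq_smul {R : Type*} [CommRing R] [IsDomain R]
    {A : Matrix n n R} {x w : n → R} {r s : R} (hAx : A *ᵥ x = r • x) (hwA : w ᵥ* A = s • w)
    (hwx : w ⬝ᵥ x ≠ 0) : s = r := by
  refine mul_right_cancel₀ hwx ?_
  rw [← smul_eq_mul, ← smul_dotProduct, ← hwA, ← dotProduct_mulVec, hAx, dotProduct_smul,
    smul_eq_mul]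

theorem map_mulVec_comp_eq_smul {R S : Type*} [CommSemiring R] [CommSemiring S] (f : R →+* S)
    {A : Matrix n n R} {x : n → R} {r : R} (h : A *ᵥ x = r • x) :
    A.map f *ᵥ (f ∘ x) = f r • (f ∘ x) :=
  funext fun i => by simp [← RingHom.map_mulVec, h]

theorem comp_vecMul_map_eq_smul {R S : Type*} [CommSemiring R] [CommSemiring S] (f : R →+* S)
    {A : Matrix n n R} {w : n → R} {r : R} (h : w ᵥ* A = r • w) :
    (f ∘ w) ᵥ* A.map f = f r • (f ∘ w) :=
  funext fun i => by simp [← RingHom.map_vecMul, h]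

theorem mulVec_apply_pos {m R : Type*} [Semiring R] [PartialOrder R] [IsStrictOrderedRing R]
    {A : Matrix m n R} (hA : ∀ i j, 0 < A i j) {x : n → R} (hx : 0 ≤ x) (hx0 : x ≠ 0) (i : m) :
    0 < (A *ᵥ x) i := by
  obtain ⟨j, hj⟩ := Function.ne_iff.1 hx0
  exact sum_pos' (fun k _ => mul_nonneg (hA i k).le (hx k))
    ⟨j, mem_univ j, mul_pos (hA i j) ((hx j).lt_of_ne' hj)⟩

section LinearOrderedField

variable {𝕜 : Type*} [Field 𝕜] [LinearOrder 𝕜] [IsStrictOrderedRing 𝕜] {A : Matrix n n 𝕜}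
  {x : n → 𝕜} {r : 𝕜}

theorem exists_gt_smul_mulVec_le_mulVec_mulVec (hA : ∀ i j, 0 < A i j) (hx : 0 ≤ x)
    (hle : r • x ≤ A *ᵥ x) (hne : A *ᵥ x ≠ r • x) :
    ∃ s, r < s ∧ s • (A *ᵥ x) ≤ A *ᵥ (A *ᵥ x) := by
  have hx0 : x ≠ 0 := by rintro rfl; simp at hne
  obtain ⟨j, -⟩ := Function.ne_iff.1 hx0
  have hAx := mulVec_apply_pos hA hx hx0
  have hgap : ∀ i, r * (A *ᵥ x) i < (A *ᵥ (A *ᵥ x)) i := fun i => by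
    simpa [mulVec_sub, mulVec_smul] using
      mulVec_apply_pos hA (sub_nonneg.2 hle) (sub_ne_zero.2 hne) i
  obtain ⟨k, -, hk⟩ :=
    exists_min_image univ (fun i => (A *ᵥ (A *ᵥ x)) i / (A *ᵥ x) i) ⟨j, mem_univ j⟩
  exact ⟨_, (lt_div_iff₀ (hAx k)).2 (hgap k),
    fun i => (le_div_iff₀ (hAx i)).1 (hk i (mem_univ i))⟩

theorem le_of_smul_le_mulVec (hA : ∀ i j, 0 ≤ A i j) (hx : ∀ i, 0 < x i)
    (hAx : A *ᵥ x = r • x) {b : n → 𝕜} {s : 𝕜} (hb : ∃ j, 0 < b j) (hsb : s • b ≤ A *ᵥ b) :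
    s ≤ r := by
  obtain ⟨j, hj⟩ := hb
  obtain ⟨k, -, hk⟩ := exists_max_image univ (fun i => b i / x i) ⟨j, mem_univ j⟩
  set t := b k / x k
  have hbt : ∀ i, b i ≤ t * x i := fun i => (div_le_iff₀ (hx i)).1 (hk i (mem_univ i))
  have hbk : b k = t * x k := (div_mul_cancel₀ _ (hx k).ne').symm
  have hbk_pos : 0 < b k :=
    hbk ▸ mul_pos ((div_pos hj (hx j)).trans_le (hk j (mem_univ j))) (hx k)
  refine le_of_mul_le_mul_right ?_ hbk_pos
  calc s * b k ≤ (A *ᵥ b) k := hsb k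
    _ ≤ ∑ i, A k i * (t * x i) :=
      sum_le_sum fun i _ => mul_le_mul_of_nonneg_left (hbt i) (hA k i)
    _ = r * b k := by
      simp_rw [mul_left_comm _ t, ← mul_sum]
      rw [← dotProduct, ← mulVec, hAx, hbk, Pi.smul_apply, smul_eq_mul]
      ring

theorem mulVec_eq_smul_of_smul_le_mulVec (hA : ∀ i j, 0 < A i j) (hx : ∀ i, 0 < x i)
    (hAx : A *ᵥ x = r • x) {b : n → 𝕜} (hb : 0 ≤ b) (hb0 : b ≠ 0) (hrb : r • b ≤ A *ᵥ b) :
    A *ᵥ b = r • b := by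
  by_contra hne
  obtain ⟨s, hrs, hs⟩ := exists_gt_smul_mulVec_le_mulVec_mulVec hA hb hrb hne
  obtain ⟨j, -⟩ := Function.ne_iff.1 hb0
  exact hrs.not_ge <| le_of_smul_le_mulVec (fun i j => (hA i j).le) hx hAx
    ⟨j, mulVec_apply_pos hA hb hb0 j⟩ hs

theorem exists_eq_smul_of_mulVec_eq_smul (hA : ∀ i j, 0 < A i j) (hx : ∀ i, 0 < x i)
    (hAx : A *ᵥ x = r • x) {y : n → 𝕜} (hAy : A *ᵥ y = r • y) : ∃ t : 𝕜, y = t • x := by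
  rcases isEmpty_or_nonempty n with hn | hn
  · exact ⟨0, Subsingleton.elim _ _⟩
  obtain ⟨k, -, hk⟩ := exists_min_image univ (fun i => y i / x i) univ_nonempty
  refine ⟨y k / x k, ?_⟩
  set z := y - (y k / x k) • x
  have hz : 0 ≤ z := fun i => by
    simpa [z] using (le_div_iff₀ (hx i)).1 (hk i (mem_univ i))
  have hzk : z k = 0 := by simp [z, div_mul_cancel₀ _ (hx k).ne']
  have hAz : A *ᵥ z = r • z := by
    simp only [z, mulVec_sub, mulVec_smul, hAx, hAy, smul_sub, smul_comm r]
  by_contra hne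
  have := mulVec_apply_pos hA hz (sub_ne_zero.2 hne) k
  rw [hAz, Pi.smul_apply, hzk, smul_zero] at this
  exact this.false

theorem le_sum_sum_of_smul_le_mulVec (hA : ∀ i j, 0 ≤ A i j) (hx : x ∈ stdSimplex 𝕜 n)
    (h : r • x ≤ A *ᵥ x) : r ≤ ∑ i, ∑ j, A i j :=
  calc r = ∑ i, r * x i := by rw [← mul_sum, hx.2, mul_one]
    _ ≤ ∑ i, (A *ᵥ x) i := sum_le_sum fun i _ => h i
    _ ≤ ∑ i, ∑ j, A i j := sum_le_sum fun i _ => sum_le_sum fun j _ =>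
      mul_le_of_le_one_right (hA i j) (mem_Icc_of_mem_stdSimplex hx j).2

end LinearOrderedField

theorem exists_pos_mulVec_eq_smul [Nonempty n] {A : Matrix n n ℝ} (hA : ∀ i j, 0 < A i j) :
    ∃ r : ℝ, 0 < r ∧ ∃ x : n → ℝ, (∀ i, 0 < x i) ∧ A *ᵥ x = r • x := by
  classical
  -- The upper bound on `r` holds on the whole simplex; it is imposed only to make `T` compact.
  let T : Set (ℝ × (n → ℝ)) :=
    Set.Icc 0 (∑ i, ∑ j, A i j) ×ˢ stdSimplex ℝ n ∩ {p | p.1 • p.2 ≤ A *ᵥ p.2}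
  have hT : IsCompact T := (isCompact_Icc.prod (isCompact_stdSimplex ℝ n)).inter_right
    (isClosed_le (by fun_prop) (by fun_prop))
  obtain ⟨i₀⟩ := ‹Nonempty n›
  have hT0 : (0, Pi.single i₀ 1) ∈ T := by
    refine ⟨⟨⟨le_rfl, ?_⟩, single_mem_stdSimplex ℝ i₀⟩, fun i => ?_⟩
    · exact sum_nonneg fun i _ => sum_nonneg fun j _ => (hA i j).le
    · simpa using (hA i i₀).le
  obtain ⟨⟨r, x⟩, ⟨⟨hr, hx⟩, hrx⟩, hmax⟩ :=
    hT.exists_isMaxOn ⟨_, hT0⟩ continuous_fst.continuousOn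
  have hx0 : x ≠ 0 := by rintro rfl; simpa using hx.2
  have hAx : A *ᵥ x = r • x := by
    by_contra hne
    obtain ⟨s, hrs, hs⟩ := exists_gt_smul_mulVec_le_mulVec_mulVec hA hx.1 hrx hne
    have hAx_pos := mulVec_apply_pos hA hx.1 hx0
    set y := (∑ i, (A *ᵥ x) i)⁻¹ • A *ᵥ x
    have hy : y ∈ stdSimplex ℝ n := inv_sum_smul_mem_stdSimplex hAx_pos
    have hsy : s • y ≤ A *ᵥ y := by
      rw [mulVec_smul, smul_comm]
      exact smul_le_smul_of_nonneg_left hs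
        (inv_nonneg.2 (sum_nonneg fun i _ => (hAx_pos i).le))
    exact hrs.not_ge (hmax (a := (s, y))
      ⟨⟨⟨hr.1.trans hrs.le, le_sum_sum_of_smul_le_mulVec (fun i j => (hA i j).le) hy hsy⟩, hy⟩,
        hsy⟩)
  have hpos : ∀ i, 0 < r * x i := by simpa [hAx] using mulVec_apply_pos hA hx.1 hx0
  exact ⟨r, hr.1.lt_of_ne (by rintro rfl; simpa using hpos i₀), x,
    fun i => pos_of_mul_pos_right (hpos i) hr.1, hAx⟩

section Complexification

variable {A : Matrix n n ℝ} {x : n → ℝ} {r : ℝ}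

theorem re_map_mulVec (A : Matrix n n ℝ) (v : n → ℂ) (i : n) :
    ((A.map (algebraMap ℝ ℂ) *ᵥ v) i).re = (A *ᵥ fun j => (v j).re) i := by
  simp [mulVec, dotProduct]

theorem im_map_mulVec (A : Matrix n n ℝ) (v : n → ℂ) (i : n) :
    ((A.map (algebraMap ℝ ℂ) *ᵥ v) i).im = (A *ᵥ fun j => (v j).im) i := by
  simp [mulVec, dotProduct]

theorem exists_eq_smul_of_map_mulVec_eq_smul (hA : ∀ i j, 0 < A i j) (hx : ∀ i, 0 < x i)
    (hAx : A *ᵥ x = r • x) {v : n → ℂ} (hv : A.map (algebraMap ℝ ℂ) *ᵥ v = (r : ℂ) • v) :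
    ∃ c : ℂ, v = c • (algebraMap ℝ ℂ ∘ x) := by
  obtain ⟨a, ha⟩ := exists_eq_smul_of_mulVec_eq_smul hA hx hAx (y := fun j => (v j).re)
    (funext fun i => by rw [← re_map_mulVec, hv]; simp)
  obtain ⟨b, hb⟩ := exists_eq_smul_of_mulVec_eq_smul hA hx hAx (y := fun j => (v j).im)
    (funext fun i => by rw [← im_map_mulVec, hv]; simp)
  exact ⟨⟨a, b⟩, funext fun i => Complex.ext (by simpa using congrFun ha i)
    (by simpa using congrFun hb i)⟩

theorem norm_smul_le_mulVec_norm (hA : ∀ i j, 0 ≤ A i j) {μ : ℂ} {v : n → ℂ}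
    (hμv : A.map (algebraMap ℝ ℂ) *ᵥ v = μ • v) :
    ‖μ‖ • (fun i => ‖v i‖) ≤ A *ᵥ fun i => ‖v i‖ := fun i =>
  calc ‖μ‖ * ‖v i‖ = ‖(A.map (algebraMap ℝ ℂ) *ᵥ v) i‖ := by rw [hμv]; simp
    _ ≤ ∑ j, ‖(A i j : ℂ) * v j‖ := norm_sum_le _ _
    _ = (A *ᵥ fun i => ‖v i‖) i := by simp [mulVec, dotProduct, abs_of_nonneg (hA i _)]

theorem norm_le_of_map_mulVec_eq_smul (hA : ∀ i j, 0 ≤ A i j) (hx : ∀ i, 0 < x i)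
    (hAx : A *ᵥ x = r • x) {μ : ℂ} {v : n → ℂ} (hv : v ≠ 0)
    (hμv : A.map (algebraMap ℝ ℂ) *ᵥ v = μ • v) : ‖μ‖ ≤ r := by
  obtain ⟨j, hj⟩ := Function.ne_iff.1 hv
  exact le_of_smul_le_mulVec hA hx hAx ⟨j, by simpa using hj⟩ (norm_smul_le_mulVec_norm hA hμv)

theorem eq_of_map_mulVec_eq_smul_of_norm_eq (hA : ∀ i j, 0 < A i j) (hx : ∀ i, 0 < x i)
    (hAx : A *ᵥ x = r • x) {μ : ℂ} {v : n → ℂ} (hv : v ≠ 0)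
    (hμv : A.map (algebraMap ℝ ℂ) *ᵥ v = μ • v) (hμ : ‖μ‖ = r) : μ = r := by
  set b : n → ℝ := fun i => ‖v i‖
  obtain ⟨k, hk⟩ := Function.ne_iff.1 hv
  have hbk : 0 < b k := norm_pos_iff.2 hk
  have hAb : A *ᵥ b = r • b :=
    mulVec_eq_smul_of_smul_le_mulVec hA hx hAx (fun i => norm_nonneg _)
      (fun h => hbk.ne' (congrFun h k)) (hμ ▸ norm_smul_le_mulVec_norm (fun i j => (hA i j).le) hμv)
  -- Rotate `v` so that the `k`-th entry of `A *ᵥ u` is the real number `r * b k = (A *ᵥ b) k`;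
  -- then row `k` of `A` kills the nonnegative vector `b - re u`.
  obtain ⟨c, hc, hck⟩ := Complex.exists_norm_eq_mul_self (μ * v k)
  set u := c • v
  have hu : A.map (algebraMap ℝ ℂ) *ᵥ u = μ • u := by rw [mulVec_smul, hμv, smul_comm]
  have hnorm_u : ∀ j, ‖u j‖ = b j := fun j => by simp [u, b, hc]
  have hd : 0 ≤ b - fun j => (u j).re := fun j => sub_nonneg.2 (hnorm_u j ▸ Complex.re_le_norm _)
  have hAd : (A *ᵥ (b - fun j => (u j).re)) k = 0 := by
    rw [mulVec_sub, Pi.sub_apply, ← re_map_mulVec, hu, hAb]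
    simp only [u, Pi.smul_apply, smul_eq_mul]
    rw [mul_left_comm, ← hck]
    simp [b, hμ]
  have hre : b = fun j => (u j).re := by
    by_contra hne
    exact (mulVec_apply_pos hA hd (sub_ne_zero.2 hne) k).ne' hAd
  have hub : u = algebraMap ℝ ℂ ∘ b := funext fun j => by
    have h : (u j).re = ‖u j‖ := by rw [hnorm_u, congrFun hre j]
    exact Complex.ext (by simp [h, hnorm_u])
      (by simpa using Complex.abs_re_eq_norm.1 (by rw [h, abs_norm]))
  have h : μ • u = (r : ℂ) • u := by rw [← hu, hub, map_mulVec_comp_eq_smul _ hAb]; rfl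
  exact mul_right_cancel₀ (by simpa [hub] using hbk.ne') (congrFun h k)

end Complexification

end Matrix

open Matrix in
theorem perron_frobenius_positive_matrix {m : ℕ} (hm : 0 < m)
    (A : Matrix (Fin m) (Fin m) ℝ) (hA : ∀ i j, 0 < A i j) :
    ∃ l : ℝ, 0 < l ∧ (l : ℂ) ∈ spectrum ℂ (A.map (algebraMap ℝ ℂ)) ∧
      (A.map (algebraMap ℝ ℂ)).charpoly.rootMultiplicity (l : ℂ) = 1 ∧
      ∀ μ : ℂ, μ ∈ spectrum ℂ (A.map (algebraMap ℝ ℂ)) → μ ≠ (l : ℂ) →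
        ‖μ‖ < l := by
  have : Nonempty (Fin m) := ⟨⟨0, hm⟩⟩
  obtain ⟨r, hr, x, hx, hAx⟩ := exists_pos_mulVec_eq_smul hA
  obtain ⟨r', -, w, hw, hwA⟩ := exists_pos_mulVec_eq_smul (A := Aᵀ) fun i j => hA j i
  rw [mulVec_transpose] at hwA
  have hwx : 0 < w ⬝ᵥ x := sum_pos (fun i _ => mul_pos (hw i) (hx i)) univ_nonempty
  rw [eq_of_mulVec_eq_smul_of_vecMul_eq_smul hAx hwA hwx.ne'] at hwA
  have hxℂ := map_mulVec_comp_eq_smul (algebraMap ℝ ℂ) hAx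
  refine ⟨r, hr, ?_, ?_, fun μ hμ hμr => ?_⟩
  · refine mem_spectrum_iff_exists_mulVec_eq_smul.2 ⟨_, fun h => ?_, hxℂ⟩
    exact (hx ⟨0, hm⟩).ne' (by simpa using congrFun h ⟨0, hm⟩)
  · refine rootMultiplicity_charpoly_eq_one hxℂ
      (fun v hv => exists_eq_smul_of_map_mulVec_eq_smul hA hx hAx hv)
      (comp_vecMul_map_eq_smul (algebraMap ℝ ℂ) hwA) ?_
    rw [← RingHom.map_dotProduct, _root_.map_ne_zero]
    exact hwx.ne'
  · obtain ⟨v, hv, hμv⟩ := mem_spectrum_iff_exists_mulVec_eq_smul.1 hμ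
    exact (norm_le_of_map_mulVec_eq_smul (fun i j => (hA i j).le) hx hAx hv hμv).lt_of_ne
      fun h => hμr (eq_of_map_mulVec_eq_smul_of_norm_eq hA hx hAx hv hμv h)
end

section
/- Let T be a real symmetric m × m matrix and 𝒯 a compact self-adjoint operator with simple dominant eigenvalue λ₁(𝒯) > 0 that is strictly larger in modulus than all other eigenvalues. If the characteristic function μ ↦ det(I − μT) converges to the Fredholm determinant D(μ) of 𝒯 uniformly on a bounded region containing 1/λ₁(𝒯) with error ε_m, and 1/λ₁(T) → 1/λ₁(𝒯), then λ₁(T) − λ₁(𝒯) = (λ₁(𝒯)²/D'(λ₁(𝒯)^{-1})) ε_m(λ₁(𝒯)^{-1}) + O(ε_m²). -/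
/-!
Write `z₀ = 1/λ₁`, `w_m = 1/λ₁(T_m)`, `δ = D'(z₀)` and `g_m = D_m - D`, so that `|g_m| ≤ ε_m`
on `U`. Since `D_m(w_m) = 0` we get `|D(w_m)| ≤ ε_m`, and as `z₀` is a simple zero this gives
`w_m - z₀ = O(ε_m)`. Taylor expansion of `D` at `z₀` and the Schwarz lemma for `g_m` on a ball
around `z₀` then turn `0 = D(w_m) + g_m(w_m)` into `δ (w_m - z₀) + g_m(z₀) = O(ε_m²)`.
Inverting, `1/w_m - 1/z₀ = -(w_m - z₀)/z₀² + O(ε_m²)`, which is the claimed expansion.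
-/

open Filter Metric Set Asymptotics Topology

theorem HasDerivAt.isBigO_sub_rev {𝕜 : Type*} [NontriviallyNormedField 𝕜] {f : 𝕜 → 𝕜}
    {f' x : 𝕜} (h : HasDerivAt f f' x) (hf' : f' ≠ 0) : (· - x) =O[𝓝 x] (f · - f x) :=
  (h.isTheta_sub hf').isBigO_symm.comp_tendsto (tendsto_id.prodMk tendsto_const_pure)

theorem AnalyticAt.isBigO_sub_sub_smul_deriv {𝕜 E : Type*} [NontriviallyNormedField 𝕜]
    [NormedAddCommGroup E] [NormedSpace 𝕜 E] {f : 𝕜 → E} {x : 𝕜} (hf : AnalyticAt 𝕜 f x) :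
    (fun z => f z - f x - (z - x) • deriv f x) =O[𝓝 x] fun z => (z - x) ^ 2 := by
  obtain ⟨p, hp⟩ := hf
  have hslope : HasDerivAt (dslope f x) (deriv (dslope f x) x) x :=
    (hp.has_fpower_series_dslope_fslope.differentiableAt).hasDerivAt
  refine ((isBigO_refl (· - x) _).smul hslope.isBigO_sub).congr (fun z => ?_) (fun z => by ring)
  rw [smul_sub, sub_smul_dslope, dslope_same, sub_sub]

theorem Complex.norm_sub_le_of_forall_norm_le {g : ℂ → ℂ} {c z : ℂ} {R B : ℝ}
    (hg : DifferentiableOn ℂ g (ball c R)) (hB : ∀ w ∈ ball c R, ‖g w‖ ≤ B)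
    (hz : z ∈ ball c R) : ‖g z - g c‖ ≤ 2 * B / R * ‖z - c‖ := by
  have hmaps : MapsTo g (ball c R) (closedBall (g c) (2 * B)) := fun w hw => by
    rw [mem_closedBall, dist_eq_norm]
    linarith [norm_sub_le (g w) (g c), hB w hw, hB c (mem_ball_self (pos_of_mem_ball hz))]
  simpa only [dist_eq_norm] using Complex.dist_le_div_mul_dist_of_mapsTo_ball hg hmaps hz

theorem isBigO_inv_sub_inv_sub_div_sq {ι 𝕜 : Type*} [NormedField 𝕜] {l : Filter ι}
    {w a : ι → 𝕜} {z₀ : 𝕜} {ε : ι → ℝ} (hz₀ : z₀ ≠ 0) (hw : Tendsto w l (𝓝 z₀))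
    (hdist : (fun m => w m - z₀) =O[l] ε) (ha : a =O[l] ε)
    (hsum : (fun m => w m - z₀ + a m) =O[l] fun m => ε m ^ 2) :
    (fun m => (w m)⁻¹ - z₀⁻¹ - a m / z₀ ^ 2) =O[l] fun m => ε m ^ 2 := by
  have hinv : (fun m => (w m)⁻¹) =O[l] fun _ => (1 : ℝ) := (hw.inv₀ hz₀).isBigO_one ℝ
  have hfirst := (hsum.mul hinv).const_mul_left (-z₀⁻¹)
  have hsecond : (fun m => -(z₀ ^ 2)⁻¹ * (a m * (w m - z₀) * (w m)⁻¹)) =O[l]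
      fun m => ε m ^ 2 * 1 :=
    (((ha.mul hdist).mul hinv).const_mul_left _).congr_right fun m => by ring
  refine (hfirst.add hsecond).congr' ?_ (Eventually.of_forall fun m => mul_one _)
  filter_upwards [hw.eventually_ne hz₀] with m hm
  field_simp
  ring

section PerturbedSimpleZero

variable {ι : Type*} {l : Filter ι} {D : ℂ → ℂ} {Dm : ι → ℂ → ℂ} {U : Set ℂ} {z₀ : ℂ}
  {ε : ι → ℝ} {w : ι → ℂ}

theorem isBigO_root_sub_of_uniform_approx (hU : U ∈ 𝓝 z₀) (hD : DifferentiableAt ℂ D z₀)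
    (hroot : D z₀ = 0) (hder : deriv D z₀ ≠ 0) (hbound : ∀ m, ∀ μ ∈ U, ‖Dm m μ - D μ‖ ≤ ε m)
    (hw : Tendsto w l (𝓝 z₀)) (hroots : ∀ m, Dm m (w m) = 0) :
    (fun m => w m - z₀) =O[l] ε := by
  have hDw : (fun m => D (w m) - D z₀) =O[l] ε := by
    refine Eventually.isBigO ?_
    filter_upwards [hw hU] with m hm
    simpa [hroot, hroots m] using hbound m (w m) hm
  exact ((hD.hasDerivAt.isBigO_sub_rev hder).comp_tendsto hw).trans hDw

theorem isBigO_root_sub_add_div_deriv_of_uniform_approx (hU : IsOpen U) (hz₀ : z₀ ∈ U)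
    (hD : DifferentiableOn ℂ D U) (hDm : ∀ m, DifferentiableOn ℂ (Dm m) U)
    (hroot : D z₀ = 0) (hder : deriv D z₀ ≠ 0) (hbound : ∀ m, ∀ μ ∈ U, ‖Dm m μ - D μ‖ ≤ ε m)
    (hw : Tendsto w l (𝓝 z₀)) (hroots : ∀ m, Dm m (w m) = 0) :
    (fun m => w m - z₀ + (Dm m z₀ - D z₀) / deriv D z₀) =O[l] fun m => ε m ^ 2 := by
  have hDz₀ : AnalyticAt ℂ D z₀ := hD.analyticAt (hU.mem_nhds hz₀)
  have hdist := isBigO_root_sub_of_uniform_approx (hU.mem_nhds hz₀) hDz₀.differentiableAt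
    hroot hder hbound hw hroots
  have htaylor : (fun m => D (w m) - (w m - z₀) * deriv D z₀) =O[l] fun m => ε m ^ 2 :=
    (hDz₀.isBigO_sub_sub_smul_deriv.comp_tendsto hw).trans (hdist.pow 2) |>.congr_left
      fun m => by simp [hroot]
  obtain ⟨R, hR, hball⟩ := Metric.isOpen_iff.mp hU z₀ hz₀
  have herr : (fun m => (Dm m (w m) - D (w m)) - (Dm m z₀ - D z₀)) =O[l]
      fun m => ε m ^ 2 := by
    refine IsBigO.trans ?_ ((isBigO_refl ε l).mul hdist.norm_left) |>.congr_right
      fun m => (sq (ε m)).symm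
    refine IsBigO.of_bound (2 / R) ?_
    filter_upwards [hw (ball_mem_nhds z₀ hR)] with m hm
    have hε : 0 ≤ ε m := (norm_nonneg _).trans (hbound m z₀ hz₀)
    calc _ ≤ 2 * ε m / R * ‖w m - z₀‖ := Complex.norm_sub_le_of_forall_norm_le
          (((hDm m).sub hD).mono hball) (fun μ hμ => hbound m μ (hball hμ)) hm
      _ = 2 / R * ‖ε m * ‖w m - z₀‖‖ := by
          rw [norm_mul, norm_norm, Real.norm_of_nonneg hε]
          ring
  -- As `Dm m (w m) = 0`, the two error terms sum to
  -- `-(deriv D z₀ * (w m - z₀) + (Dm m z₀ - D z₀))`.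
  refine ((htaylor.add herr).const_mul_left (-(deriv D z₀)⁻¹)).congr_left fun m => ?_
  field_simp
  rw [hroots m]
  ring

end PerturbedSimpleZero

theorem nystrom_eigenvalue_error_expansion_general
    (D : ℂ → ℂ) (lam₁ : ℝ) (hlam₁ : 0 < lam₁)
    (U : Set ℂ) (hU : IsOpen U) (hmemU : (1 / lam₁ : ℂ) ∈ U)
    (hD : AnalyticOn ℂ D U)
    (hroot : D (1 / lam₁) = 0) (hder : deriv D (1 / lam₁) ≠ 0)
    (Dm : ℕ → ℂ → ℂ) (hDm : ∀ m, AnalyticOn ℂ (Dm m) U)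
    (ε : ℕ → ℝ)
    (hbound : ∀ m, ∀ μ ∈ U, ‖Dm m μ - D μ‖ ≤ ε m)
    (lamT : ℕ → ℝ)
    (hroots : ∀ m, Dm m (1 / lamT m) = 0)
    (htend : Tendsto (fun m => 1 / lamT m) atTop (nhds (1 / lam₁))) :
    ∃ C : ℝ, ∀ᶠ m in atTop,
      ‖((lamT m : ℂ) - (lam₁ : ℂ))
          - (lam₁ ^ 2 / deriv D (1 / lam₁)) * (Dm m (1 / lam₁) - D (1 / lam₁))‖
        ≤ C * (ε m) ^ 2 := by
  have hU₀ : U ∈ 𝓝 (1 / lam₁ : ℂ) := hU.mem_nhds hmemU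
  have hw : Tendsto (fun m => 1 / (lamT m : ℂ)) atTop (𝓝 (1 / lam₁)) := by
    simpa [Function.comp_def] using (Complex.continuous_ofReal.tendsto _).comp htend
  have hdist := isBigO_root_sub_of_uniform_approx hU₀
    (hD.differentiableOn.differentiableAt hU₀) hroot hder hbound hw hroots
  have hexp := isBigO_root_sub_add_div_deriv_of_uniform_approx hU hmemU hD.differentiableOn
    (fun m => (hDm m).differentiableOn) hroot hder hbound hw hroots
  have hE : (fun m => (Dm m (1 / lam₁) - D (1 / lam₁)) / deriv D (1 / lam₁)) =O[atTop] ε :=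
    ((IsBigO.of_norm_le fun m => hbound m _ hmemU).const_mul_left (deriv D (1 / lam₁))⁻¹)
      |>.congr_left fun m => inv_mul_eq_div _ _
  obtain ⟨C, hC⟩ :=
    (isBigO_inv_sub_inv_sub_div_sq (by simp [hlam₁.ne']) hw hdist hE hexp).bound
  refine ⟨C, hC.mono fun m hm => ?_⟩
  rw [norm_pow, Real.norm_eq_abs, sq_abs] at hm
  refine (congrArg norm ?_).trans_le hm
  simp only [one_div, inv_inv, inv_pow, div_inv_eq_mul]
  ring

theorem nystrom_eigenvalue_error_expansion
    (D : ℂ → ℂ) (lam₁ : ℝ) (hlam₁ : 0 < lam₁)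
    (U : Set ℂ) (hU : IsOpen U) (hmemU : (1 / lam₁ : ℂ) ∈ U)
    (hD : AnalyticOn ℂ D U)
    (hroot : D (1 / lam₁) = 0) (hder : deriv D (1 / lam₁) ≠ 0)
    (Dm : ℕ → ℂ → ℂ) (hDm : ∀ m, AnalyticOn ℂ (Dm m) U)
    (ε : ℕ → ℝ) (hε : Tendsto ε atTop (nhds 0))
    (hbound : ∀ m, ∀ μ ∈ U, ‖Dm m μ - D μ‖ ≤ ε m)
    (lamT : ℕ → ℝ) (hlamT : ∀ m, 0 < lamT m)
    (hroots : ∀ m, Dm m (1 / lamT m) = 0)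
    (htend : Tendsto (fun m => 1 / lamT m) atTop (nhds (1 / lam₁))) :
    ∃ C : ℝ, ∀ᶠ m in atTop,
      ‖((lamT m : ℂ) - (lam₁ : ℂ))
          - (lam₁ ^ 2 / deriv D (1 / lam₁)) * (Dm m (1 / lam₁) - D (1 / lam₁))‖
        ≤ C * (ε m) ^ 2 :=
  nystrom_eigenvalue_error_expansion_general D lam₁ hlam₁ U hU hmemU hD hroot hder Dm hDm ε hbound
    lamT hroots htend
end
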